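/- arXiv:2004.05564 — 2 statements merged into one kernel-verified Lean document; each statement's English description precedes it below -/
import Mathlib

section
/- Let f be a smooth positive function on an open interval I ⊆ ℝ, and let u : ℝ² → ℝ be a smooth function with u(ℝ²) ⊆ I that solves the MS equation of I ×_f ℝ² on all of ℝ². Fix u₀ ∈ I and define ψ : I → ℝ by ψ(t) = ∫_{u₀}^t (1/f(s)) ds, and set v = ψ ∘ u. Then f(u)·Dv = Du and v satisfies div( Dv / √(1 + |Dv|²) ) = 2·f'(u) / √(1 + |Dv|²) at every point of ℝ². -/
open Real Set

noncomputable section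

/-- The Euclidean plane `ℝ²`. -/
abbrev Plane : Type := EuclideanSpace ℝ (Fin 2)

/-- Divergence of a vector field on the Euclidean plane. -/
def pdiv (V : Plane → Plane) (x : Plane) : ℝ :=
  ∑ i : Fin 2, fderiv ℝ V x (EuclideanSpace.single i (1 : ℝ)) i

/-- The minimal surface equation of the warped product `I ×_f ℝ²` (n = 2):
`div( Du / (f(u)·√(f(u)² + |Du|²)) ) = (f'(u)/√(f(u)² + |Du|²))·(2 − |Du|²/f(u)²)`. -/
def MSEquation (f : ℝ → ℝ) (u : Plane → ℝ) : Prop :=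
  ∀ x : Plane,
    pdiv (fun y =>
      (f (u y) * Real.sqrt ((f (u y)) ^ 2 + ‖gradient u y‖ ^ 2))⁻¹ • gradient u y) x =
    deriv f (u x) / Real.sqrt ((f (u x)) ^ 2 + ‖gradient u x‖ ^ 2) *
      (2 - ‖gradient u x‖ ^ 2 / (f (u x)) ^ 2)

lemma euclid_decomp (w : Plane) :
    w = ∑ i : Fin 2, (w i) • EuclideanSpace.single i (1 : ℝ) := by
  ext j
  fin_cases j <;> simp [EuclideanSpace.single_apply]

lemma pdiv_smul (c : Plane → ℝ) (W : Plane → Plane) (x : Plane)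
    (hc : DifferentiableAt ℝ c x) (hW : DifferentiableAt ℝ W x) :
    pdiv (fun y => c y • W y) x = fderiv ℝ c x (W x) + c x * pdiv W x := by
  have h := fderiv_fun_smul hc hW
  have hrep : fderiv ℝ c x (W x)
      = ∑ i : Fin 2, (W x i) * fderiv ℝ c x (EuclideanSpace.single i (1 : ℝ)) := by
    conv_lhs => rw [euclid_decomp (W x)]
    rw [map_sum]
    simp [smul_eq_mul]
  unfold pdiv
  rw [h, hrep, Finset.mul_sum, ← Finset.sum_add_distrib]
  congr 1
  ext i
  simp [smul_eq_mul]
  ring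

theorem stmt11 (I : Set ℝ) (hIopen : IsOpen I) (hIconn : I.OrdConnected)
    (f : ℝ → ℝ) (hf : ContDiffOn ℝ (⊤ : ℕ∞) f I) (hfpos : ∀ t ∈ I, 0 < f t)
    (u : Plane → ℝ) (hu : ContDiff ℝ (⊤ : ℕ∞) u) (hrange : ∀ p, u p ∈ I)
    (hms : MSEquation f u)
    (u₀ : ℝ) (hu₀ : u₀ ∈ I)
    (ψ : ℝ → ℝ) (hψ : ∀ t, ψ t = ∫ s in u₀..t, (f s)⁻¹)
    (v : Plane → ℝ) (hv : v = ψ ∘ u) :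
    (∀ p : Plane, f (u p) • gradient v p = gradient u p) ∧
    (∀ x : Plane,
      pdiv (fun y => (Real.sqrt (1 + ‖gradient v y‖ ^ 2))⁻¹ • gradient v y) x =
        2 * deriv f (u x) / Real.sqrt (1 + ‖gradient v x‖ ^ 2)) := by
  have hudiff : Differentiable ℝ u := hu.differentiable (by simp)
  have hfcont : ContinuousOn f I := hf.continuousOn
  have hfne : ∀ t ∈ I, f t ≠ 0 := fun t ht => (hfpos t ht).ne'
  -- ψ has derivative (f t)⁻¹ at each t ∈ I
  have hψd : ∀ t ∈ I, HasDerivAt ψ (f t)⁻¹ t := by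
    intro t ht
    have hsub : uIcc u₀ t ⊆ I := hIconn.uIcc_subset hu₀ ht
    have hcontinv : ContinuousOn (fun s => (f s)⁻¹) I := hfcont.inv₀ hfne
    have hint : IntervalIntegrable (fun s => (f s)⁻¹) MeasureTheory.volume u₀ t :=
      (hcontinv.mono hsub).intervalIntegrable
    have hca : ContinuousAt (fun s => (f s)⁻¹) t :=
      hcontinv.continuousAt (hIopen.mem_nhds ht)
    have hd := intervalIntegral.integral_hasDerivAt_right hint
      (hcontinv.stronglyMeasurableAtFilter hIopen t ht) hca
    have : ψ = fun t => ∫ s in u₀..t, (f s)⁻¹ := funext hψ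
    rw [this]
    exact hd
  -- gradient of v
  have hvgrad : ∀ p : Plane, gradient v p = (f (u p))⁻¹ • gradient u p := by
    intro p
    have hfd : HasFDerivAt v ((f (u p))⁻¹ • fderiv ℝ u p) p := by
      rw [hv]
      exact (hψd (u p) (hrange p)).comp_hasFDerivAt p (hudiff p).hasFDerivAt
    have h2 : gradient v p = (InnerProductSpace.toDual ℝ Plane).symm
        ((f (u p))⁻¹ • fderiv ℝ u p) := by
      rw [gradient, hfd.fderiv]
    rw [h2, map_smul]
    rfl
  have hpart1 : ∀ p : Plane, f (u p) • gradient v p = gradient u p := by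
    intro p
    rw [hvgrad p, smul_smul, mul_inv_cancel₀ (hfne _ (hrange p)), one_smul]
  refine ⟨hpart1, ?_⟩
  intro x
  set G : Plane → Plane := fun y => gradient u y with hG
  set S : Plane → ℝ := fun y => Real.sqrt ((f (u y)) ^ 2 + ‖G y‖ ^ 2) with hS
  set V : Plane → Plane := fun y => (f (u y) * S y)⁻¹ • G y with hV
  have hfu : ∀ y, 0 < f (u y) := fun y => hfpos _ (hrange y)
  have hsum_pos : ∀ y, 0 < (f (u y)) ^ 2 + ‖G y‖ ^ 2 := by
    intro y
    have := hfu y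
    positivity
  have hspos : ∀ y, 0 < S y := fun y => Real.sqrt_pos.2 (hsum_pos y)
  -- norm of gradient v
  have hnv : ∀ y, ‖gradient v y‖ ^ 2 = ‖G y‖ ^ 2 / (f (u y)) ^ 2 := by
    intro y
    rw [hvgrad y, norm_smul, norm_inv, Real.norm_eq_abs, abs_of_pos (hfu y)]
    rw [mul_pow]
    rw [inv_pow]
    rw [div_eq_inv_mul]
  have hsqrt1 : ∀ y, Real.sqrt (1 + ‖gradient v y‖ ^ 2) = S y / f (u y) := by
    intro y
    rw [hnv y]
    have hne : f (u y) ≠ 0 := (hfu y).ne'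
    have h1 : (1 : ℝ) + ‖G y‖ ^ 2 / (f (u y)) ^ 2
        = ((f (u y)) ^ 2 + ‖G y‖ ^ 2) / (f (u y)) ^ 2 := by
      field_simp
    rw [h1, Real.sqrt_div' _ (by positivity), Real.sqrt_sq (hfu y).le]
  -- the new field equals f(u) • V
  have hfield : (fun y => (Real.sqrt (1 + ‖gradient v y‖ ^ 2))⁻¹ • gradient v y)
      = fun y => f (u y) • V y := by
    funext y
    rw [hsqrt1 y, hvgrad y, hV]
    simp only [smul_smul]
    congr 1
    have h1 : f (u y) ≠ 0 := (hfu y).ne'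
    have h2 : S y ≠ 0 := (hspos y).ne'
    field_simp
  rw [hfield]
  -- differentiability facts
  have htd : ∀ y, fderiv ℝ u y = InnerProductSpace.toDual ℝ Plane (G y) := by
    intro y
    rw [hG]
    simp only [gradient]
    rw [(InnerProductSpace.toDual ℝ Plane).apply_symm_apply]
  have hGdiff : Differentiable ℝ G := by
    have h1 : ContDiff ℝ (⊤ : ℕ∞) (fderiv ℝ u) := hu.fderiv_right (by simp)
    have h2 : Differentiable ℝ (fderiv ℝ u) := h1.differentiable (by simp)
    have hrep : G = fun y => ∑ i : Fin 2,
        (fderiv ℝ u y (EuclideanSpace.single i (1 : ℝ))) • EuclideanSpace.single i (1 : ℝ) := by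
      funext y
      conv_lhs => rw [euclid_decomp (G y)]
      refine Finset.sum_congr rfl fun i _ => ?_
      congr 1
      rw [htd y, InnerProductSpace.toDual_apply_apply]
      simp [real_inner_comm (G y), EuclideanSpace.inner_single_left, EuclideanSpace.inner_single_right]
    rw [hrep]
    exact Differentiable.fun_sum fun i _ =>
      (h2.clm_apply (differentiable_const _)).smul_const _
  have hnormsq : Differentiable ℝ (fun y => ‖G y‖ ^ 2) := by
    have h1 : Differentiable ℝ (fun y => (inner ℝ (G y) (G y) : ℝ)) :=
      fun y => (hGdiff y).inner ℝ (hGdiff y)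
    have h2 : (fun y => ‖G y‖ ^ 2) = fun y => (inner ℝ (G y) (G y) : ℝ) := by
      funext y; rw [real_inner_self_eq_norm_sq]
    rw [h2]; exact h1
  have hfudiff : ∀ y, HasFDerivAt (fun z => f (u z)) (deriv f (u y) • fderiv ℝ u y) y := by
    intro y
    have hfd : DifferentiableAt ℝ f (u y) :=
      ((hf.differentiableOn (by simp)).differentiableAt (hIopen.mem_nhds (hrange y)))
    exact hfd.hasDerivAt.comp_hasFDerivAt y (hudiff y).hasFDerivAt
  have hSdiff : ∀ y, DifferentiableAt ℝ S y := by
    intro y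
    apply DifferentiableAt.sqrt
    · exact (((hfudiff y).differentiableAt).pow 2).add (hnormsq y)
    · exact (hsum_pos y).ne'
  have hVdiff : ∀ y, DifferentiableAt ℝ V y := by
    intro y
    apply DifferentiableAt.fun_smul
    · apply DifferentiableAt.inv
      · exact ((hfudiff y).differentiableAt).mul (hSdiff y)
      · exact (mul_pos (hfu y) (hspos y)).ne'
    · exact hGdiff y
  -- product rule for pdiv
  rw [pdiv_smul _ _ x (hfudiff x).differentiableAt (hVdiff x)]
  -- compute fderiv of f ∘ u applied to V x
  have hfder : fderiv ℝ (fun z => f (u z)) x = deriv f (u x) • fderiv ℝ u x :=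
    (hfudiff x).fderiv
  have hGapp : fderiv ℝ u x (G x) = ‖G x‖ ^ 2 := by
    rw [htd x, InnerProductSpace.toDual_apply_apply, real_inner_self_eq_norm_sq]
  have happ : fderiv ℝ (fun z => f (u z)) x (V x)
      = deriv f (u x) * ((f (u x) * S x)⁻¹ * ‖G x‖ ^ 2) := by
    rw [hfder, hV]
    simp only [ContinuousLinearMap.smul_apply, map_smul, smul_eq_mul]
    rw [hGapp]
    ring
  rw [happ]
  -- use MS equation
  have hmsx : pdiv V x = deriv f (u x) / S x * (2 - ‖G x‖ ^ 2 / (f (u x)) ^ 2) := hms x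
  rw [hmsx, hsqrt1 x]
  have h1 : f (u x) ≠ 0 := (hfu x).ne'
  have h2 : S x ≠ 0 := (hspos x).ne'
  field_simp
  ring
end
end

section
/- Let f : ℝ → ℝ be given by f(x) = √(1 + cosh⁴(x)) and let φ(x) = 1/cosh²(x). Then for every x ∈ ℝ one has φ''(x) + (f'(x)/f(x))·φ'(x) = −2·((cosh²x − 1)² + 2) / (cosh⁴x·(1 + cosh⁴x)), which is strictly negative; moreover φ is positive, bounded, and non-constant. -/
open Real

noncomputable section

/-! With `c = cosh x` and `s² = c² - 1`, one has `φ' = -2 s / c³`, `φ'' = -2 (c² - 3 s²) / c⁴` and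
`f'/f = (f²)'/(2 f²) = 2 c³ s / (1 + c⁴)`, so that `φ'' + (f'/f) φ' = -2 (c⁴ - 2c² + 3) / (c⁴ (1 + c⁴))`,
whose numerator `(c² - 1)² + 2` is positive. -/

theorem Real.hasDerivAt_one_div_cosh_pow (n : ℕ) (x : ℝ) :
    HasDerivAt (fun x => 1 / cosh x ^ n) (-n * sinh x / cosh x ^ (n + 1)) x := by
  have hc := (cosh_pos x).ne'
  refine ((hasDerivAt_const x (1 : ℝ)).fun_div ((hasDerivAt_cosh x).fun_pow n)
    (pow_ne_zero n hc)).congr_deriv ?_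
  rcases n with _ | n
  · simp
  · rw [Nat.add_sub_cancel]; field_simp; ring

theorem Real.hasDerivAt_sinh_div_cosh_pow (n : ℕ) (x : ℝ) :
    HasDerivAt (fun x => sinh x / cosh x ^ n)
      ((cosh x ^ 2 - n * sinh x ^ 2) / cosh x ^ (n + 1)) x := by
  have hc := (cosh_pos x).ne'
  refine ((hasDerivAt_sinh x).fun_div ((hasDerivAt_cosh x).fun_pow n)
    (pow_ne_zero n hc)).congr_deriv ?_
  rcases n with _ | n
  · field_simp; ring
  · rw [Nat.add_sub_cancel]; field_simp; ring

theorem deriv_sqrt_div_sqrt {g : ℝ → ℝ} {x : ℝ} (hg : DifferentiableAt ℝ g x) (hx : 0 < g x) :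
    deriv (fun y => √(g y)) x / √(g x) = deriv g x / (2 * g x) := by
  rw [(hg.hasDerivAt.sqrt hx.ne').deriv, div_div, mul_assoc, mul_self_sqrt hx.le]

theorem Real.deriv_one_div_cosh_sq :
    deriv (fun x => 1 / cosh x ^ 2) = fun x => -2 * (sinh x / cosh x ^ 3) := by
  funext x
  rw [(hasDerivAt_one_div_cosh_pow 2 x).deriv]
  ring

theorem Real.deriv_deriv_one_div_cosh_sq (x : ℝ) :
    deriv (deriv fun x => 1 / cosh x ^ 2) x =
      -2 * ((cosh x ^ 2 - 3 * sinh x ^ 2) / cosh x ^ 4) := by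
  rw [deriv_one_div_cosh_sq, ((hasDerivAt_sinh_div_cosh_pow 3 x).const_mul (-2)).deriv]
  norm_num

theorem Real.deriv_sqrt_one_add_cosh_pow_four_div (x : ℝ) :
    deriv (fun x => √(1 + cosh x ^ 4)) x / √(1 + cosh x ^ 4) =
      2 * cosh x ^ 3 * sinh x / (1 + cosh x ^ 4) := by
  have hg : HasDerivAt (fun x => 1 + cosh x ^ 4) (4 * cosh x ^ 3 * sinh x) x := by
    simpa using ((hasDerivAt_cosh x).fun_pow 4).const_add 1
  rw [deriv_sqrt_div_sqrt hg.differentiableAt (by positivity), hg.deriv]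
  field_simp
  ring

theorem Real.radialLaplacian_one_div_cosh_sq (x : ℝ) :
    deriv (deriv fun x => 1 / cosh x ^ 2) x +
        deriv (fun x => √(1 + cosh x ^ 4)) x / √(1 + cosh x ^ 4) *
          deriv (fun x => 1 / cosh x ^ 2) x =
      -2 * ((cosh x ^ 2 - 1) ^ 2 + 2) / (cosh x ^ 4 * (1 + cosh x ^ 4)) := by
  have hc := (cosh_pos x).ne'
  rw [deriv_deriv_one_div_cosh_sq, deriv_sqrt_one_add_cosh_pow_four_div, deriv_one_div_cosh_sq]
  field_simp
  rw [sinh_sq]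
  ring

theorem Real.one_div_cosh_sq_le_one (x : ℝ) : 1 / cosh x ^ 2 ≤ 1 :=
  div_le_one_of_le₀ (one_le_pow₀ (one_le_cosh x)) (by positivity)

theorem Real.one_div_cosh_sq_ne_one {x : ℝ} (hx : x ≠ 0) : 1 / cosh x ^ 2 ≠ 1 :=
  ((div_lt_one (by positivity)).2 (one_lt_pow₀ (one_lt_cosh.2 hx) two_ne_zero)).ne

theorem stmt13 (f φ : ℝ → ℝ)
    (hf : ∀ x, f x = Real.sqrt (1 + Real.cosh x ^ 4))
    (hφ : ∀ x, φ x = 1 / Real.cosh x ^ 2) :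
    (∀ x : ℝ,
      deriv (deriv φ) x + (deriv f x / f x) * deriv φ x =
        -2 * ((Real.cosh x ^ 2 - 1) ^ 2 + 2) /
          (Real.cosh x ^ 4 * (1 + Real.cosh x ^ 4)) ∧
      deriv (deriv φ) x + (deriv f x / f x) * deriv φ x < 0) ∧
    (∀ x : ℝ, 0 < φ x) ∧ (∃ M : ℝ, ∀ x : ℝ, φ x ≤ M) ∧ (∃ x y : ℝ, φ x ≠ φ y) := by
  obtain rfl : f = fun x => √(1 + cosh x ^ 4) := funext hf
  obtain rfl : φ = fun x => 1 / cosh x ^ 2 := funext hφ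
  refine ⟨fun x => ⟨radialLaplacian_one_div_cosh_sq x, ?_⟩, fun x => by positivity,
    ⟨1, one_div_cosh_sq_le_one⟩, 1, 0, by simpa using one_div_cosh_sq_ne_one one_ne_zero⟩
  rw [radialLaplacian_one_div_cosh_sq]
  exact div_neg_of_neg_of_pos (by nlinarith [sq_nonneg (cosh x ^ 2 - 1)]) (by positivity)
end
end
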